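/- arXiv:2405.04022 — 8 statements merged into one kernel-verified Lean document; each statement's English description precedes it below -/
import Mathlib

section
/- For f ∈ R[X₁,…,Xₙ] and s ∈ Sⁿ(R)⁻, the restriction of the product f·Γ(s) (computed in the Laurent series ring R((X₁⁻¹,…,Xₙ⁻¹))) to exponents in (-∞, 0] equals the generating function Γ(f ∘ s) of the shifted sequence f ∘ s. -/
noncomputable section

variable {R : Type*}

/-- Right-shift action of a (multivariate) polynomial on a sequence indexed by `(-ℕ)^n`;
the index `a : σ → ℕ` encodes the point `-a`, so `(f ∘ s)_{-b} = ∑ f_a s_{-b-a}`. -/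
def shiftA [CommSemiring R] {σ : Type*} (f : MvPolynomial σ R) (s : (σ → ℕ) → R) :
    (σ → ℕ) → R :=
  fun b => ∑ a ∈ f.support, f.coeff a * s (fun j => b j + a j)

/-- The generating function `Γ(s) = ∑_{c ≤ 0} s_c X^c`, as a coefficient function on `ℤ^n`. -/
def GammaZ [Zero R] {n : ℕ} (s : (Fin n → ℕ) → R) : (Fin n → ℤ) → R :=
  fun c => if ∀ i, c i ≤ 0 then s (fun i => (-(c i)).toNat) else 0

/-- Coefficient function of the product `f · G` in the Laurent series ring
`R((X₁⁻¹, …, Xₙ⁻¹))`. -/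
def polyMulG [CommSemiring R] {n : ℕ} (f : MvPolynomial (Fin n) R) (G : (Fin n → ℤ) → R) :
    (Fin n → ℤ) → R :=
  fun c => ∑ a ∈ f.support, f.coeff a * G (fun i => c i - (a i : ℤ))

/-- Vector of partial degrees `δᵢ f`. -/
def degV [CommSemiring R] {n : ℕ} (f : MvPolynomial (Fin n) R) : Fin n → ℕ :=
  fun i => f.support.sup fun a => a i

/-- `degV` as a finitely supported function. -/
def degE [CommSemiring R] {n : ℕ} (f : MvPolynomial (Fin n) R) : Fin n →₀ ℕ :=
  Finsupp.equivFunOnFinite.symm (degV f)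

/-- Embedding of `R[Xᵢ]` into `R[X₁,…,Xₙ]`. -/
def embedP [CommSemiring R] {n : ℕ} (i : Fin n) (p : Polynomial R) : MvPolynomial (Fin n) R :=
  Polynomial.eval₂ MvPolynomial.C (MvPolynomial.X i) p

def toExp {n : ℕ} (c : Fin n → ℤ) : Fin n →₀ ℕ :=
  Finsupp.equivFunOnFinite.symm fun i => (c i).toNat

/-- The coefficient function on `ℤ^n` of a polynomial. -/
def toCoeffZ [CommSemiring R] {n : ℕ} (g : MvPolynomial (Fin n) R) : (Fin n → ℤ) → R :=
  fun c => if ∀ i, 0 ≤ c i then g.coeff (toExp c) else 0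

def oneExp {n : ℕ} : Fin n →₀ ℕ := Finsupp.equivFunOnFinite.symm 1

/-- The border polynomial `β₀(f,s) = (f·Γ(s)) | [1, deg f]`. -/
def mvBeta0 [CommRing R] {n : ℕ} (f : MvPolynomial (Fin n) R) (s : (Fin n → ℕ) → R) :
    MvPolynomial (Fin n) R :=
  ∑ c ∈ Finset.Icc oneExp (degE f),
    MvPolynomial.monomial c (polyMulG f (GammaZ s) fun i => (c i : ℤ))

/-- `β₀(f,s) / (X₁⋯Xₙ)`. -/
def mvBeta0Div [CommRing R] {n : ℕ} (f : MvPolynomial (Fin n) R) (s : (Fin n → ℕ) → R) :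
    MvPolynomial (Fin n) R :=
  ∑ c ∈ Finset.Icc oneExp (degE f),
    MvPolynomial.monomial (c - oneExp) (polyMulG f (GammaZ s) fun i => (c i : ℤ))

/-- `β₀(f,s) / Xᵢ`. -/
def mvBeta0DivXi [CommRing R] {n : ℕ} (i : Fin n) (f : MvPolynomial (Fin n) R)
    (s : (Fin n → ℕ) → R) : MvPolynomial (Fin n) R :=
  ∑ c ∈ Finset.Icc oneExp (degE f),
    MvPolynomial.monomial (c - Finsupp.single i 1) (polyMulG f (GammaZ s) fun i => (c i : ℤ))

/-- Generalized Newton divided difference `ν^a f = (f | [a, deg f]) / X^a`. -/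
def nuA [CommRing R] {n : ℕ} (a : Fin n →₀ ℕ) (f : MvPolynomial (Fin n) R) :
    MvPolynomial (Fin n) R :=
  ∑ b ∈ Finset.Icc a (degE f), MvPolynomial.monomial (b - a) (f.coeff b)

/-- the restriction of `f·Γ(s)` to exponents in `(-∞, 0]`
equals `Γ(f ∘ s)`. -/
theorem stmt1 [CommRing R] {n : ℕ} (f : MvPolynomial (Fin n) R) (s : (Fin n → ℕ) → R) :
    (fun c : Fin n → ℤ => if ∀ i, c i ≤ 0 then polyMulG f (GammaZ s) c else 0) =
      GammaZ (shiftA f s) := by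
  funext c
  unfold polyMulG GammaZ shiftA
  by_cases h : ∀ i, c i ≤ 0
  · rw [if_pos h, if_pos h]
    apply Finset.sum_congr rfl
    intro a _
    have h2 : ∀ i, c i - (a i : ℤ) ≤ 0 := fun i => by have := h i; omega
    rw [if_pos h2]
    have he : (fun i => (-((fun i => c i - (a i : ℤ)) i)).toNat) = fun j => (-c j).toNat + a j := by
      funext i
      have := h i
      simp only
      omega
    rw [he]
  · simp [h]
end
end

section
/- For f ∈ R[X₁,…,Xₙ] and s ∈ Sⁿ(R)⁻, the following are equivalent: (a) f ∘ s = 0; (b) (f·Γ(s))|(-∞,0] = 0; (c) Supp(f·Γ(s)) ⊆ (0, deg f] = {a ∈ ℤⁿ : a ≰ 0 componentwise and a ≤ deg f}; (d) there exists G in the Laurent series ring with f·Γ(s) = X₁⋯Xₙ·G and Supp(G) ⊆ (-1, deg f - 1]. -/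
noncomputable section

variable {R : Type*}

lemma polyMulG_neg [CommRing R] {n : ℕ} (f : MvPolynomial (Fin n) R)
    (s : (Fin n → ℕ) → R) (c : Fin n → ℤ) (hc : ∀ i, c i ≤ 0) :
    polyMulG f (GammaZ s) c = shiftA f s (fun i => (-(c i)).toNat) := by
  unfold polyMulG shiftA GammaZ
  apply Finset.sum_congr rfl
  intro a _
  have h : ∀ i, c i - (a i : ℤ) ≤ 0 := fun i => by have := hc i; omega
  rw [if_pos h]
  congr 1
  apply congrArg
  funext i
  show (-(c i - (a i : ℤ))).toNat = (-(c i)).toNat + a i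
  have := hc i
  omega

lemma polyMulG_le_deg [CommRing R] {n : ℕ} (f : MvPolynomial (Fin n) R)
    (s : (Fin n → ℕ) → R) (c : Fin n → ℤ) (h : polyMulG f (GammaZ s) c ≠ 0) :
    ∀ i, c i ≤ (degV f i : ℤ) := by
  by_contra hc
  push_neg at hc
  obtain ⟨i, hi⟩ := hc
  apply h
  apply Finset.sum_eq_zero
  intro a ha
  have hai : a i ≤ degV f i := Finset.le_sup (f := fun a => a i) ha
  have hne : ¬ ∀ j, c j - (a j : ℤ) ≤ 0 := by
    push_neg; exact ⟨i, by omega⟩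
  unfold GammaZ
  rw [if_neg hne, mul_zero]

/-- equivalence of (a) `f ∘ s = 0`; (b) `(f·Γ(s))|(-∞,0] = 0`;
(c) `Supp(f·Γ(s)) ⊆ (0, deg f]`; (d) `f·Γ(s) = X₁⋯Xₙ·G` with
`Supp(G) ⊆ (-1, deg f - 1]`. -/
theorem stmt2 [CommRing R] {n : ℕ} (f : MvPolynomial (Fin n) R) (s : (Fin n → ℕ) → R) :
    (shiftA f s = 0 ↔
      ∀ c : Fin n → ℤ, (∀ i, c i ≤ 0) → polyMulG f (GammaZ s) c = 0) ∧
    (shiftA f s = 0 ↔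
      ∀ c : Fin n → ℤ, polyMulG f (GammaZ s) c ≠ 0 →
        ¬ (∀ i, c i ≤ 0) ∧ ∀ i, c i ≤ (degV f i : ℤ)) ∧
    (shiftA f s = 0 ↔
      ∃ G : (Fin n → ℤ) → R,
        (∀ c : Fin n → ℤ, polyMulG f (GammaZ s) c = G fun i => c i - 1) ∧
        ∀ c : Fin n → ℤ, G c ≠ 0 →
          ¬ (∀ i, c i ≤ -1) ∧ ∀ i, c i ≤ (degV f i : ℤ) - 1) := by
  have hab : shiftA f s = 0 ↔
      ∀ c : Fin n → ℤ, (∀ i, c i ≤ 0) → polyMulG f (GammaZ s) c = 0 := by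
    constructor
    · intro h c hc
      rw [polyMulG_neg f s c hc, h]; rfl
    · intro h
      funext b
      have h1 := polyMulG_neg f s (fun i => -(b i : ℤ)) (fun i => by simp)
      have h2 : (fun i => (-(-((b i : ℕ) : ℤ))).toNat) = b := by funext i; simp
      rw [h2] at h1
      rw [Pi.zero_apply, ← h1]
      exact h _ (fun i => by simp)
  refine ⟨hab, ?_, ?_⟩
  · rw [hab]
    constructor
    · intro h c hc
      exact ⟨fun hall => hc (h c hall), polyMulG_le_deg f s c hc⟩
    · intro h c hc
      by_contra hne
      exact (h c hne).1 hc
  · rw [hab]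
    constructor
    · intro h
      refine ⟨fun c => polyMulG f (GammaZ s) (fun i => c i + 1), ?_, ?_⟩
      · intro c
        show _ = polyMulG f (GammaZ s) (fun i => (c i - 1) + 1)
        congr 1; funext i; ring
      · intro c hc
        constructor
        · intro hall
          exact hc (h _ (fun i => by have := hall i; omega))
        · intro i
          have := polyMulG_le_deg f s _ hc i
          omega
    · rintro ⟨G, hG1, hG2⟩ c hc
      rw [hG1 c]
      by_contra hne
      exact (hG2 _ hne).1 (fun i => by have := hc i; omega)
end
end

section
/- For a 1-dimensional sequence s : -ℕ → R and a polynomial f ∈ R[X], f annihilates s (i.e. f ∘ s = 0 under right-shifting) if and only if the product f·Γ(s), computed in R((X⁻¹)), lies in X·R[X]. -/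
/-! The coefficient of `f·Γ(s)` at `X^(-b)`, `b ≥ 0`, is `(f ∘ s)_b`, and all coefficients above
`X^(deg f)` vanish. So `f ∘ s = 0` says exactly that `f·Γ(s)` is supported in `[1, deg f]`, i.e. is
`X` times a polynomial. -/

noncomputable section

variable {R : Type*}

/-- Right-shift action on a 1-D sequence indexed by `-ℕ`: index `b : ℕ` encodes `-b`,
so `(f ∘ s)_{-b} = ∑ f_a s_{-b-a}`. -/
def shiftR1 [CommSemiring R] (f : Polynomial R) (s : ℕ → R) : ℕ → R :=
  fun b => ∑ a ∈ Finset.range (f.natDegree + 1), f.coeff a * s (b + a)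

/-- The generating function `Γ(s) = ∑_{c ≤ 0} s_c X^c` as coefficient function on `ℤ`. -/
def Gamma1 [Zero R] (s : ℕ → R) : ℤ → R :=
  fun c => if c ≤ 0 then s (-c).toNat else 0

/-- Coefficient function of the product `f · G` in `R((X⁻¹))`. -/
def polyMul1 [CommSemiring R] (f : Polynomial R) (G : ℤ → R) : ℤ → R :=
  fun c => ∑ a ∈ Finset.range (f.natDegree + 1), f.coeff a * G (c - (a : ℤ))

/-- Coefficient function on `ℤ` of a polynomial. -/
def toZfun [Semiring R] (p : Polynomial R) : ℤ → R :=
  fun c => if 0 ≤ c then p.coeff c.toNat else 0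

/-- The border polynomial `β₀(f,s) = (f·Γ(s)) | [1, deg f]`. -/
def beta0Poly1 [CommSemiring R] (f : Polynomial R) (s : ℕ → R) : Polynomial R :=
  ∑ c ∈ Finset.Icc 1 f.natDegree, Polynomial.monomial c (polyMul1 f (Gamma1 s) (c : ℤ))

/-- `β₀(f,s) / X`. -/
def beta0DivX1 [CommSemiring R] (f : Polynomial R) (s : ℕ → R) : Polynomial R :=
  ∑ c ∈ Finset.Icc 1 f.natDegree, Polynomial.monomial (c - 1) (polyMul1 f (Gamma1 s) (c : ℤ))


open Polynomial

theorem exists_toZfun_eq_of_eq_zero_off_Ico [Semiring R] (h : ℤ → R) (N : ℕ)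
    (h_neg : ∀ c < 0, h c = 0) (h_large : ∀ c : ℤ, N ≤ c → h c = 0) :
    ∃ g : R[X], toZfun g = h := by
  refine ⟨∑ n ∈ Finset.range N, monomial n (h n), funext fun c => ?_⟩
  unfold toZfun
  split_ifs with hc
  · lift c to ℕ using hc
    simp only [finsetSum_coeff, coeff_monomial, Finset.sum_ite_eq', Finset.mem_range,
      Int.toNat_natCast]
    split_ifs with hcN
    · rfl
    · exact (h_large c (by omega)).symm
  · exact (h_neg c (by omega)).symm

theorem polyMul1_Gamma1_neg_natCast [CommSemiring R] (f : R[X]) (s : ℕ → R) (b : ℕ) :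
    polyMul1 f (Gamma1 s) (-b) = shiftR1 f s b := by
  refine Finset.sum_congr rfl fun a _ => ?_
  rw [Gamma1, if_pos (by omega), show (-(-(b : ℤ) - a)).toNat = b + a by omega]

theorem polyMul1_Gamma1_of_natDegree_lt [CommSemiring R] (f : R[X]) (s : ℕ → R) {c : ℤ}
    (hc : (f.natDegree : ℤ) < c) : polyMul1 f (Gamma1 s) c = 0 := by
  refine Finset.sum_eq_zero fun a ha => ?_
  rw [Finset.mem_range] at ha
  rw [Gamma1, if_neg (by omega), mul_zero]

/-- `f ∘ s = 0` iff `f·Γ(s) ∈ X·R[X]` in `R((X⁻¹))`. -/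
theorem stmt3 [CommRing R] (s : ℕ → R) (f : Polynomial R) :
    shiftR1 f s = 0 ↔
      ∃ g : Polynomial R, ∀ c : ℤ, polyMul1 f (Gamma1 s) c = toZfun g (c - 1) := by
  constructor
  · intro h_ann
    obtain ⟨g, hg⟩ := exists_toZfun_eq_of_eq_zero_off_Ico
      (fun c => polyMul1 f (Gamma1 s) (c + 1)) f.natDegree
      (fun c hc => by
        rw [show c + 1 = -((-(c + 1)).toNat : ℕ) by omega, polyMul1_Gamma1_neg_natCast, h_ann]
        rfl)
      (fun c hc => polyMul1_Gamma1_of_natDegree_lt f s (by omega))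
    exact ⟨g, fun c => by simp only [hg, sub_add_cancel]⟩
  · rintro ⟨g, hg⟩
    funext b
    rw [← polyMul1_Gamma1_neg_natCast, hg, toZfun, if_neg (by omega)]
    rfl
end
end

section
/- If s : (-ℕ)ⁿ → R is a nonzero linear recurring sequence, then Γ(s) = X₁⋯Xₙ·G/f for some nonzero f ∈ Ann(s) and Laurent series G with Supp(G) ⊆ (-1, deg f - 1]. Conversely, if f is monic (leading coefficient 1 in the appropriate sense), G ∈ Lₙ with Supp(G) ⊆ (-1, deg f - 1], then X₁⋯Xₙ·G/f lies in the power series ring Sₙ = R[[X₁⁻¹,…,Xₙ⁻¹]], and the sequence s defined by Γ(s) = X₁⋯Xₙ·G/f satisfies f ∈ Ann(s). -/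
noncomputable section

variable {R : Type*}

lemma degE_apply [CommSemiring R] {n : ℕ} (f : MvPolynomial (Fin n) R) (i : Fin n) :
    degE f i = degV f i := by simp [degE]

lemma le_degV [CommSemiring R] {n : ℕ} {f : MvPolynomial (Fin n) R} {a : Fin n →₀ ℕ}
    (ha : a ∈ f.support) (i : Fin n) : a i ≤ degV f i :=
  Finset.le_sup (f := fun a => a i) ha

def mkSeq [CommRing R] {n : ℕ} (f : MvPolynomial (Fin n) R) (G : (Fin n → ℤ) → R)
    (b : Fin n → ℕ) : R :=
  G (fun i => (degV f i : ℤ) - b i - 1) -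
    ∑ a ∈ ((f.support.erase (degE f)).filter fun a => ∀ i, degV f i ≤ a i + b i).attach,
      f.coeff a.1 * mkSeq f G (fun i => b i + a.1 i - degV f i)
termination_by ∑ i, b i
decreasing_by
  obtain ⟨⟨hne, hsupp⟩, hcond⟩ := Finset.mem_filter.mp a.2 |>.imp Finset.mem_erase.mp id
  have hle : ∀ i, a.1 i ≤ degV f i := le_degV hsupp
  have hex : ∃ i, a.1 i ≠ degE f i := by
    by_contra h
    push_neg at h
    exact hne (Finsupp.ext h)
  obtain ⟨i₀, hi₀⟩ := hex
  rw [degE_apply] at hi₀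
  apply Finset.sum_lt_sum (fun i _ => by have := hle i; omega)
  exact ⟨i₀, Finset.mem_univ _, by have := hle i₀; have := hcond i₀; omega⟩

lemma polyMulG_zero_of_gt [CommRing R] {n : ℕ} (f : MvPolynomial (Fin n) R)
    (s : (Fin n → ℕ) → R) {c : Fin n → ℤ} {i : Fin n} (h : (degV f i : ℤ) < c i) :
    polyMulG f (GammaZ s) c = 0 := by
  apply Finset.sum_eq_zero
  intro a ha
  have : ¬ ∀ j, c j - (a j : ℤ) ≤ 0 := by
    intro hall
    have := hall i
    have := le_degV ha i
    omega
  simp only [GammaZ]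
  rw [if_neg this, mul_zero]

lemma polyMulG_nonpos [CommRing R] {n : ℕ} (f : MvPolynomial (Fin n) R)
    (s : (Fin n → ℕ) → R) {c : Fin n → ℤ} (h : ∀ i, c i ≤ 0) :
    polyMulG f (GammaZ s) c = shiftA f s (fun i => (-(c i)).toNat) := by
  apply Finset.sum_congr rfl
  intro a _
  have hall : ∀ j, c j - (a j : ℤ) ≤ 0 := fun j => by have := h j; omega
  have harg : (fun i => (-(c i - (a i : ℤ))).toNat) = fun j => (-(c j)).toNat + a j := by
    funext j; have := h j; omega
  simp only [GammaZ, if_pos hall, harg]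

lemma mkSeq_key [CommRing R] {n : ℕ} (f : MvPolynomial (Fin n) R)
    (G : (Fin n → ℤ) → R) (hf : f.coeff (degE f) = 1)
    (hG : ∀ c : Fin n → ℤ, G c ≠ 0 → ¬ (∀ i, c i ≤ -1) ∧ ∀ i, c i ≤ (degV f i : ℤ) - 1) :
    ∀ c : Fin n → ℤ, polyMulG f (GammaZ (mkSeq f G)) c = G fun i => c i - 1 := by
  intro c
  by_cases hone : (1 : R) = 0
  · have : Subsingleton R := subsingleton_of_zero_eq_one hone.symm
    exact Subsingleton.elim _ _
  have hd : degE f ∈ f.support := by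
    rw [MvPolynomial.mem_support_iff, hf]; exact hone
  by_cases hc : ∀ i, c i ≤ (degV f i : ℤ)
  · set s := mkSeq f G with hs
    set b : Fin n → ℕ := fun i => ((degV f i : ℤ) - c i).toNat with hbdef
    have hb : ∀ i, (b i : ℤ) = (degV f i : ℤ) - c i := fun i => by
      have := hc i; simp [hbdef]; omega
    have step1 : polyMulG f (GammaZ s) c =
        ∑ a ∈ f.support, f.coeff a *
          (if ∀ i, degV f i ≤ a i + b i then s (fun i => b i + a i - degV f i) else 0) := by
      apply Finset.sum_congr rfl
      intro a _
      congr 1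
      have hiff : (∀ i, c i - (a i : ℤ) ≤ 0) ↔ (∀ i, degV f i ≤ a i + b i) := by
        apply forall_congr'
        intro i; have := hb i; omega
      rw [GammaZ]
      by_cases hcond : ∀ i, degV f i ≤ a i + b i
      · rw [if_pos (hiff.mpr hcond), if_pos hcond]
        congr 1
        funext i
        have := hb i; have := hcond i; omega
      · rw [if_neg (fun h => hcond (hiff.mp h)), if_neg hcond]
    rw [step1, ← Finset.add_sum_erase _ _ hd, hf, one_mul]
    have hdc : ∀ i, degV f i ≤ (degE f) i + b i := fun i => by
      rw [degE_apply]; omega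
    rw [if_pos hdc]
    have hargd : (fun i => b i + (degE f) i - degV f i) = b := by
      funext i; rw [degE_apply]; omega
    rw [hargd]
    have step2 : ∑ a ∈ f.support.erase (degE f), f.coeff a *
          (if ∀ i, degV f i ≤ a i + b i then s (fun i => b i + a i - degV f i) else 0) =
        ∑ a ∈ ((f.support.erase (degE f)).filter fun a => ∀ i, degV f i ≤ a i + b i).attach,
          f.coeff a.1 * s (fun i => b i + a.1 i - degV f i) := by
      rw [Finset.sum_attach _ (fun a => f.coeff a * s (fun i => b i + a i - degV f i)),
        Finset.sum_filter]
      apply Finset.sum_congr rfl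
      intro a _
      split <;> simp
    rw [step2]
    conv_lhs => rw [hs, mkSeq]
    rw [← hs]
    have : (fun i => (degV f i : ℤ) - b i - 1) = fun i => c i - 1 := by
      funext i; have := hb i; omega
    rw [this]
    ring
  · push_neg at hc
    obtain ⟨i, hi⟩ := hc
    rw [polyMulG_zero_of_gt f _ hi]
    by_contra h
    have := (hG _ (Ne.symm h)).2 i
    omega

lemma mkSeq_shift [CommRing R] {n : ℕ} (f : MvPolynomial (Fin n) R)
    (G : (Fin n → ℤ) → R) (hf : f.coeff (degE f) = 1)
    (hG : ∀ c : Fin n → ℤ, G c ≠ 0 → ¬ (∀ i, c i ≤ -1) ∧ ∀ i, c i ≤ (degV f i : ℤ) - 1) :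
    shiftA f (mkSeq f G) = 0 := by
  funext b
  have key := mkSeq_key f G hf hG (fun i => -(b i : ℤ))
  rw [polyMulG_nonpos f _ (fun i => by omega)] at key
  have harg : (fun i => (-(-(b i:ℤ))).toNat) = b := by funext i; omega
  rw [harg] at key
  have hzero : G (fun i => -(b i : ℤ) - 1) = 0 := by
    by_contra h
    exact (hG _ h).1 (fun i => by omega)
  rw [key, hzero]
  rfl


/-- a nonzero lrs `s` has `Γ(s) = X₁⋯Xₙ·G/f` with `f ∈ Ann(s)` nonzero and
`Supp(G) ⊆ (-1, deg f - 1]`; conversely, for monic `f` and such `G`, `X₁⋯Xₙ·G/f` is a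
power series `Γ(s)` of a sequence `s` with `f ∈ Ann(s)`. -/
theorem stmt4 [CommRing R] {n : ℕ} :
    (∀ s : (Fin n → ℕ) → R, s ≠ 0 → (∃ f : MvPolynomial (Fin n) R, f ≠ 0 ∧ shiftA f s = 0) →
      ∃ (f : MvPolynomial (Fin n) R) (G : (Fin n → ℤ) → R), f ≠ 0 ∧ shiftA f s = 0 ∧
        (∀ c : Fin n → ℤ, polyMulG f (GammaZ s) c = G fun i => c i - 1) ∧
        (∀ c : Fin n → ℤ, G c ≠ 0 →
          ¬ (∀ i, c i ≤ -1) ∧ ∀ i, c i ≤ (degV f i : ℤ) - 1)) ∧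
    (∀ (f : MvPolynomial (Fin n) R) (G : (Fin n → ℤ) → R),
      f.coeff (degE f) = 1 →
      (∀ c : Fin n → ℤ, G c ≠ 0 →
        ¬ (∀ i, c i ≤ -1) ∧ ∀ i, c i ≤ (degV f i : ℤ) - 1) →
      ∃ s : (Fin n → ℕ) → R,
        (∀ c : Fin n → ℤ, polyMulG f (GammaZ s) c = G fun i => c i - 1) ∧
        shiftA f s = 0) := by
  constructor
  · rintro s _ ⟨f, hf0, hfs⟩
    refine ⟨f, fun c => polyMulG f (GammaZ s) (fun i => c i + 1), hf0, hfs, ?_, ?_⟩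
    · intro c
      congr 1
      funext i
      ring
    · intro c hcne
      constructor
      · intro hle
        apply hcne
        show polyMulG f (GammaZ s) (fun i => c i + 1) = 0
        rw [polyMulG_nonpos f s (fun i => by have := hle i; omega)]
        rw [hfs]
        rfl
      · intro i
        by_contra h
        push_neg at h
        exact hcne (polyMulG_zero_of_gt f s (i := i) (by omega))
  · intro f G hf hG
    exact ⟨mkSeq f G, mkSeq_key f G hf hG, mkSeq_shift f G hf hG⟩
end
end

section
/- For n = 1, s : -ℕ → R and f ∈ R[X] with deg f ≥ 1, one has f·Γ(s) = X·Σ_{a=0}^{deg f - 1} s_{-a}·ν^{a+1} f + Γ(f ∘ s) in R((X⁻¹)), where ν is Newton's divided difference operator ν g = (g - g(0))/X iterated. -/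
noncomputable section

variable {R : Type*}

lemma coeff_divX_iter [CommRing R] (p : Polynomial R) (k j : ℕ) :
    (Polynomial.divX^[k] p).coeff j = p.coeff (j + k) := by
  induction k generalizing p j with
  | zero => simp
  | succ k ih =>
    rw [Function.iterate_succ_apply, ih, Polynomial.coeff_divX, Nat.add_assoc]

/-- for `n = 1`, `f·Γ(s) = X·∑_{a=0}^{deg f - 1} s_{-a}·ν^{a+1} f + Γ(f ∘ s)`,
where `ν` is Newton's divided difference operator `ν g = (g - g(0))/X` (i.e. `Polynomial.divX`). -/
theorem stmt7 [CommRing R] (s : ℕ → R) (f : Polynomial R) (hdeg : 1 ≤ f.natDegree) :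
    ∀ c : ℤ, polyMul1 f (Gamma1 s) c =
      toZfun (Polynomial.X *
        ∑ a ∈ Finset.range f.natDegree, Polynomial.C (s a) * (Polynomial.divX^[a + 1] f)) c +
      Gamma1 (shiftR1 f s) c := by
  intro c
  set P : Polynomial R :=
    ∑ a ∈ Finset.range f.natDegree, Polynomial.C (s a) * (Polynomial.divX^[a + 1] f) with hP
  by_cases hc : c ≤ 0
  · have hz : toZfun (Polynomial.X * P) c = 0 := by
      unfold toZfun
      split_ifs with h
      · have : c = 0 := le_antisymm hc h
        subst this
        simp [Polynomial.mul_coeff_zero]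
      · rfl
    rw [hz, zero_add]
    simp only [polyMul1, Gamma1, shiftR1, if_pos hc]
    refine Finset.sum_congr rfl fun a _ => ?_
    have h1 : c - (a : ℤ) ≤ 0 := by omega
    have h2 : (-(c - (a : ℤ))).toNat = (-c).toNat + a := by omega
    rw [if_pos h1, h2]
  · push_neg at hc
    obtain ⟨n, rfl⟩ : ∃ n : ℕ, c = (n : ℤ) + 1 := ⟨(c - 1).toNat, by omega⟩
    have hG : Gamma1 (shiftR1 f s) ((n : ℤ) + 1) = 0 := by
      simp only [Gamma1]
      rw [if_neg (by omega)]
    rw [hG, add_zero]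
    have ht : toZfun (Polynomial.X * P) ((n : ℤ) + 1) = P.coeff n := by
      unfold toZfun
      rw [if_pos (by omega)]
      have : ((n : ℤ) + 1).toNat = n + 1 := by omega
      rw [this, Polynomial.coeff_X_mul]
    rw [ht]
    have hPc : P.coeff n = ∑ a ∈ Finset.range f.natDegree, s a * f.coeff (n + 1 + a) := by
      rw [hP, Polynomial.finset_sum_coeff]
      refine Finset.sum_congr rfl fun a _ => ?_
      rw [Polynomial.coeff_C_mul, coeff_divX_iter]
      congr 2
      omega
    rw [hPc]
    -- LHS
    have hsub : Finset.Ico (n + 1) (f.natDegree + 1) ⊆ Finset.range (f.natDegree + 1) := by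
      rw [Finset.range_eq_Ico]
      exact Finset.Ico_subset_Ico (Nat.zero_le _) le_rfl
    have hL : polyMul1 f (Gamma1 s) ((n : ℤ) + 1)
        = ∑ a ∈ Finset.Ico (n + 1) (f.natDegree + 1), f.coeff a * s (a - (n + 1)) := by
      unfold polyMul1
      rw [← Finset.sum_subset hsub]
      · refine Finset.sum_congr rfl fun a ha => ?_
        rw [Finset.mem_Ico] at ha
        unfold Gamma1
        have h2 : (-((n : ℤ) + 1 - a)).toNat = a - (n + 1) := by omega
        rw [if_pos (by omega), h2]
      · intro a ha hna
        rw [Finset.mem_range] at ha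
        rw [Finset.mem_Ico] at hna
        have : ¬ ((n : ℤ) + 1 - a ≤ 0) := by omega
        unfold Gamma1
        rw [if_neg this, mul_zero]
    rw [hL, Finset.sum_Ico_eq_sum_range]
    have hsub2 : Finset.range (f.natDegree + 1 - (n + 1)) ⊆ Finset.range f.natDegree :=
      Finset.range_subset_range.mpr (by omega)
    rw [Finset.sum_subset hsub2]
    · refine Finset.sum_congr rfl fun i _ => ?_
      rw [mul_comm]
      congr 2
      omega
    · intro i hi hni
      rw [Finset.mem_range] at hi hni
      have : f.natDegree < n + 1 + i := by omega
      rw [Polynomial.coeff_eq_zero_of_natDegree_lt this, zero_mul]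
end
end

section
/- Let R be a factorial domain and s : -ℕ → R a sequence with Ann(s) ≠ (0). Then Ann(s) is a principal ideal generated by a primitive polynomial g, unique up to a unit of R; moreover gcd(g, β₀(g,s)/X) = 1 and deg g = min{deg f : f ∈ Ann(s), f ≠ 0}. -/
noncomputable section

variable {R : Type*}

/-!
Read `s` as the series `Γ(s) = ∑_{c ≤ 0} s_{-c} X^c` of `R((X⁻¹))`. Then `f ∈ Ann(s)` says that
`f · Γ(s)` has no terms of degree `≤ 0`, i.e. that it is the polynomial `β₀(f,s)`.

Over the fraction field `K` of `R` the annihilator is a nonzero ideal of the PID `K[X]`, and its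
trace on `R[X]` is `Ann(s)`; by Gauss's lemma this trace is generated by a primitive polynomial
`g`. Uniqueness and minimality of the degree follow from divisibility. If `g = e g₂` and
`β₀(g,s)/X = e q`, then `e · (g₂ Γ(s) - X q) = g Γ(s) - β₀(g,s) = 0` in the domain `R((X⁻¹))`, so
`g₂ Γ(s) = X q` has no terms of degree `≤ 0`; thus `g₂ ∈ Ann(s)`, `g ∣ g₂`, and `e` is a unit.
-/

open Polynomial

section Shift

variable [CommSemiring R]

/- A function `G : ℤ → R` stands for the formal series `∑ G c X^c` of `R((X⁻¹))`; `shiftEnd R`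
is multiplication by `X`, so that `aeval (shiftEnd R) f` is multiplication by `f`. -/
variable (R) in
def shiftEnd : Module.End R (ℤ → R) where
  toFun G c := G (c - 1)
  map_add' _ _ := rfl
  map_smul' _ _ := rfl

lemma shiftEnd_pow_apply (n : ℕ) (G : ℤ → R) (c : ℤ) : (shiftEnd R ^ n) G c = G (c - n) := by
  induction n generalizing c with
  | zero => simp
  | succ n ih =>
    rw [pow_succ', Module.End.mul_apply]
    change (shiftEnd R ^ n) G (c - 1) = _
    rw [ih]
    congr 1
    push_cast
    ring

lemma aeval_shiftEnd (f : R[X]) (G : ℤ → R) : aeval (shiftEnd R) f G = polyMul1 f G := by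
  funext c
  simp only [aeval_eq_sum_range, LinearMap.sum_apply, Finset.sum_apply, LinearMap.smul_apply,
    Pi.smul_apply, shiftEnd_pow_apply, smul_eq_mul, polyMul1]

lemma polyMul1_mul (f g : R[X]) (G : ℤ → R) :
    polyMul1 (f * g) G = polyMul1 f (polyMul1 g G) := by
  rw [← aeval_shiftEnd, ← aeval_shiftEnd, ← aeval_shiftEnd, map_mul, Module.End.mul_apply]

lemma polyMul1_add (f g : R[X]) (G : ℤ → R) :
    polyMul1 (f + g) G = polyMul1 f G + polyMul1 g G := by
  rw [← aeval_shiftEnd, ← aeval_shiftEnd, ← aeval_shiftEnd, map_add, LinearMap.add_apply]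

lemma polyMul1_single_zero_one (p : R[X]) : polyMul1 p (Pi.single 0 1) = toZfun p := by
  funext c
  rw [polyMul1, toZfun]
  split_ifs with hc
  · rw [Finset.sum_eq_single c.toNat]
    · rw [show c - (c.toNat : ℤ) = 0 by omega, Pi.single_eq_same, mul_one]
    · intro a _ ha
      simp [show c - (a : ℤ) ≠ 0 by omega]
    · intro hc'
      simp only [Finset.mem_range, not_lt] at hc'
      rw [coeff_eq_zero_of_natDegree_lt (by omega), zero_mul]
  · exact Finset.sum_eq_zero fun a _ => by simp [show c - (a : ℤ) ≠ 0 by omega]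

lemma polyMul1_toZfun (f p : R[X]) : polyMul1 f (toZfun p) = toZfun (f * p) := by
  rw [← polyMul1_single_zero_one, ← polyMul1_single_zero_one, polyMul1_mul]

lemma polyMul1_eq_zero_of_le {G : ℤ → R} {N : ℤ} (hG : ∀ c ≤ N, G c = 0) (f : R[X]) {c : ℤ}
    (hc : c ≤ N) : polyMul1 f G c = 0 :=
  Finset.sum_eq_zero fun a _ => by rw [hG _ (by omega), mul_zero]

lemma polyMul1_eq_zero_of_lt {G : ℤ → R} {N : ℤ} (hG : ∀ c, N < c → G c = 0) (f : R[X]) {c : ℤ}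
    (hc : N + f.natDegree < c) : polyMul1 f G c = 0 :=
  Finset.sum_eq_zero fun a ha => by
    have := Finset.mem_range.mp ha
    rw [hG _ (by omega), mul_zero]

lemma toZfun_eq_zero_of_lt (p : R[X]) {c : ℤ} (hc : (p.natDegree : ℤ) < c) : toZfun p c = 0 := by
  rw [toZfun, if_pos (by omega), coeff_eq_zero_of_natDegree_lt (by omega)]

/- `R((X⁻¹))` has no zero divisors: the coefficient of `f · G` at `deg f + max supp G` is
the product of the two leading coefficients. -/
lemma eq_zero_of_polyMul1_eq_zero [NoZeroDivisors R] {f : R[X]} (hf : f ≠ 0) {G : ℤ → R}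
    {N : ℤ} (hG : ∀ c, N < c → G c = 0) (h : polyMul1 f G = 0) : G = 0 := by
  by_contra hne
  obtain ⟨c₀, hc₀, hmax⟩ := Int.exists_greatest_of_bdd (P := fun c => G c ≠ 0)
    ⟨N, fun c hc => not_lt.mp fun hlt => hc (hG c hlt)⟩ (Function.ne_iff.mp hne)
  have htop := congrFun h (c₀ + f.natDegree)
  rw [polyMul1, Finset.sum_eq_single_of_mem f.natDegree (Finset.self_mem_range_succ _)] at htop
  · rw [add_sub_cancel_right] at htop
    exact mul_ne_zero (leadingCoeff_ne_zero.mpr hf) hc₀ htop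
  · intro a ha hne
    have := Finset.mem_range.mp ha
    rw [not_not.mp fun h' => absurd (hmax _ h') (by omega), mul_zero]

end Shift

section Annihilator

variable [CommSemiring R]

lemma Gamma1_eq_zero_of_pos (s : ℕ → R) {c : ℤ} (hc : 0 < c) : Gamma1 s c = 0 :=
  if_neg (by omega)

lemma shiftR1_apply (f : R[X]) (s : ℕ → R) (b : ℕ) :
    shiftR1 f s b = polyMul1 f (Gamma1 s) (-b) :=
  Finset.sum_congr rfl fun a _ => by
    rw [Gamma1, if_pos (by omega), show (-(-(b : ℤ) - a)).toNat = b + a by omega]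

lemma shiftR1_eq_zero_iff (f : R[X]) (s : ℕ → R) :
    shiftR1 f s = 0 ↔ ∀ c ≤ 0, polyMul1 f (Gamma1 s) c = 0 := by
  refine ⟨fun h c hc => ?_, fun h => funext fun b => (shiftR1_apply f s b).trans (h _ (by omega))⟩
  rw [show c = -((-c).toNat : ℕ) by omega, ← shiftR1_apply, h, Pi.zero_apply]

variable (R) in
def shiftAnnIdeal (s : ℕ → R) : Ideal R[X] where
  carrier := {f | shiftR1 f s = 0}
  zero_mem' := by
    funext b
    simp [shiftR1]
  add_mem' {f g} hf hg := by
    simp only [Set.mem_ofPred_eq, shiftR1_eq_zero_iff, polyMul1_add] at hf hg ⊢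
    intro c hc
    rw [Pi.add_apply, hf c hc, hg c hc, add_zero]
  smul_mem' h f hf := by
    simp only [Set.mem_ofPred_eq, shiftR1_eq_zero_iff, smul_eq_mul, polyMul1_mul] at hf ⊢
    exact fun c hc => polyMul1_eq_zero_of_le hf h hc

@[simp]
lemma mem_shiftAnnIdeal {s : ℕ → R} {f : R[X]} : f ∈ shiftAnnIdeal R s ↔ shiftR1 f s = 0 :=
  Iff.rfl

lemma shiftR1_map {S : Type*} [CommSemiring S] {φ : R →+* S} (hφ : Function.Injective φ)
    (f : R[X]) (s : ℕ → R) : shiftR1 (f.map φ) (φ ∘ s) = φ ∘ shiftR1 f s := by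
  funext b
  simp only [shiftR1, Function.comp_apply, map_sum, map_mul, coeff_map,
    natDegree_map_eq_of_injective hφ]

lemma comap_shiftAnnIdeal_map {S : Type*} [CommSemiring S] {φ : R →+* S}
    (hφ : Function.Injective φ) (s : ℕ → R) :
    (shiftAnnIdeal S (φ ∘ s)).comap (mapRingHom φ) = shiftAnnIdeal R s := by
  ext f
  simp [shiftR1_map hφ, funext_iff, map_eq_zero_iff φ hφ]

end Annihilator

section Primitive

variable [CommRing R] [IsDomain R] [IsGCDMonoid R] {K : Type*} [Field K] [Algebra R K]
  [IsFractionRing R K]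

lemma exists_isPrimitive_associated_map {p : K[X]} (hp : p ≠ 0) :
    ∃ g : R[X], g.IsPrimitive ∧ Associated (g.map (algebraMap R K)) p := by
  let := Classical.arbitrary (NormalizedGCDMonoid R)
  set q := IsLocalization.integerNormalization (nonZeroDivisors R) p
  obtain ⟨b, hb, hqp⟩ := IsLocalization.integerNormalization_spec (nonZeroDivisors R) p
  have hb0 : algebraMap R K b ≠ 0 :=
    IsFractionRing.to_map_ne_zero_of_mem_nonZeroDivisors hb
  have hq0 : q ≠ 0 := IsFractionRing.integerNormalization_eq_zero_iff.not.mpr hp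
  have hc0 : algebraMap R K q.content ≠ 0 :=
    (map_ne_zero_iff _ (IsFractionRing.injective R K)).mpr (content_eq_zero_iff.not.mpr hq0)
  have hmap : C (algebraMap R K q.content) * q.primPart.map (algebraMap R K) =
      C (algebraMap R K b) * p := by
    rw [← map_C, ← Polynomial.map_mul, ← eq_C_content_mul_primPart, hqp, Algebra.smul_def,
      Polynomial.algebraMap_apply]
  refine ⟨q.primPart, q.isPrimitive_primPart, ?_⟩
  exact (associated_unit_mul_left _ _ (isUnit_C.mpr hc0.isUnit)).symm.trans
    (hmap ▸ associated_unit_mul_left _ _ (isUnit_C.mpr hb0.isUnit))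

variable (K) in
lemma exists_isPrimitive_comap_eq_span {J : Ideal K[X]} (hJ : J ≠ ⊥) :
    ∃ g : R[X], g.IsPrimitive ∧ J.comap (mapRingHom (algebraMap R K)) = Ideal.span {g} := by
  obtain ⟨p, rfl⟩ := Submodule.IsPrincipal.principal J
  obtain ⟨g, hg, hgp⟩ := exists_isPrimitive_associated_map (R := R)
    (Ideal.span_singleton_eq_bot.not.mp hJ)
  refine ⟨g, hg, Ideal.ext fun f => ?_⟩
  rw [Ideal.mem_comap, coe_mapRingHom, Ideal.submodule_span_eq, Ideal.mem_span_singleton,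
    Ideal.mem_span_singleton, ← hgp.dvd_iff_dvd_left,
    hg.dvd_iff_fraction_map_dvd_fraction_map K]

end Primitive

section Border

variable [CommSemiring R]

lemma toZfun_X_mul_eq_zero_of_nonpos (q : R[X]) {c : ℤ} (hc : c ≤ 0) : toZfun (X * q) c = 0 := by
  rcases hc.lt_or_eq with hc | rfl
  · exact if_neg (by omega)
  · exact (if_pos le_rfl).trans (coeff_X_mul_zero q)

lemma beta0Poly1_coeff (f : R[X]) (s : ℕ → R) (n : ℕ) :
    (beta0Poly1 f s).coeff n =
      if n ∈ Finset.Icc 1 f.natDegree then polyMul1 f (Gamma1 s) n else 0 := by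
  simp only [beta0Poly1, finsetSum_coeff, coeff_monomial]
  exact Finset.sum_ite_eq' _ _ _

lemma beta0Poly1_eq_X_mul (f : R[X]) (s : ℕ → R) : beta0Poly1 f s = X * beta0DivX1 f s := by
  rw [beta0DivX1, Finset.mul_sum, beta0Poly1]
  refine Finset.sum_congr rfl fun c hc => ?_
  rw [← monomial_one_one_eq_X, monomial_mul_monomial, one_mul,
    Nat.add_sub_cancel' (Finset.mem_Icc.mp hc).1]

lemma toZfun_beta0Poly1 {g : R[X]} {s : ℕ → R} (hg : shiftR1 g s = 0) :
    toZfun (beta0Poly1 g s) = polyMul1 g (Gamma1 s) := by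
  funext c
  rw [toZfun]
  split_ifs with hc
  · rw [beta0Poly1_coeff]
    split_ifs with hmem
    · rw [Int.toNat_of_nonneg hc]
    · rw [Finset.mem_Icc, not_and_or] at hmem
      rcases hmem with h0 | hdeg
      · exact ((shiftR1_eq_zero_iff g s).mp hg c (by omega)).symm
      · exact (polyMul1_eq_zero_of_lt (N := 0) (fun _ => Gamma1_eq_zero_of_pos s) g
          (by omega)).symm
  · exact ((shiftR1_eq_zero_iff g s).mp hg c (by omega)).symm

end Border

section Coprime

variable [CommRing R]

lemma polyMul1_sub (f : R[X]) (G H : ℤ → R) :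
    polyMul1 f (G - H) = polyMul1 f G - polyMul1 f H := by
  rw [← aeval_shiftEnd, ← aeval_shiftEnd, ← aeval_shiftEnd, map_sub]

lemma shiftR1_eq_zero_of_dvd_beta0DivX1 [IsDomain R] {e g : R[X]} {s : ℕ → R}
    (hg : shiftR1 (e * g) s = 0) (he : e ≠ 0) (hdvd : e ∣ beta0DivX1 (e * g) s) :
    shiftR1 g s = 0 := by
  obtain ⟨q, hq⟩ := hdvd
  have hbounded : ∀ c, (max g.natDegree (X * q).natDegree : ℤ) < c →
      (polyMul1 g (Gamma1 s) - toZfun (X * q) : ℤ → R) c = 0 := fun c hc => by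
    rw [Pi.sub_apply, toZfun_eq_zero_of_lt _ (by omega),
      polyMul1_eq_zero_of_lt (N := 0) (fun _ => Gamma1_eq_zero_of_pos s) g (by omega), sub_zero]
  have hmul : polyMul1 e (polyMul1 g (Gamma1 s) - toZfun (X * q)) = 0 := by
    rw [polyMul1_sub, ← polyMul1_mul, polyMul1_toZfun, ← toZfun_beta0Poly1 hg,
      beta0Poly1_eq_X_mul, hq, mul_left_comm, sub_self]
  have hGq := sub_eq_zero.mp (eq_zero_of_polyMul1_eq_zero he hbounded hmul)
  rw [shiftR1_eq_zero_iff]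
  intro c hc
  rw [hGq, toZfun_X_mul_eq_zero_of_nonpos q hc]

lemma isUnit_of_dvd_of_dvd_beta0DivX1 [IsDomain R] {g e : R[X]} {s : ℕ → R}
    (hgen : ∀ h, shiftR1 h s = 0 ↔ g ∣ h) (hg : g ≠ 0) (heg : e ∣ g)
    (heβ : e ∣ beta0DivX1 g s) : IsUnit e := by
  obtain ⟨g₂, rfl⟩ := heg
  have hg₂ : shiftR1 g₂ s = 0 :=
    shiftR1_eq_zero_of_dvd_beta0DivX1 ((hgen _).mpr dvd_rfl) (left_ne_zero_of_mul hg) heβ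
  have hdvd : e * g₂ ∣ 1 * g₂ := (one_mul g₂).symm ▸ (hgen g₂).mp hg₂
  exact isUnit_of_dvd_one ((mul_dvd_mul_iff_right (right_ne_zero_of_mul hg)).mp hdvd)

end Coprime

lemma exists_isPrimitive_shiftAnnIdeal_eq_span [CommRing R] [IsDomain R] [IsGCDMonoid R]
    {s : ℕ → R} (hann : shiftAnnIdeal R s ≠ ⊥) :
    ∃ g : R[X], g.IsPrimitive ∧ shiftAnnIdeal R s = Ideal.span {g} := by
  have hinj := IsFractionRing.injective R (FractionRing R)
  obtain ⟨f, hf, hf0⟩ := (Submodule.ne_bot_iff _).mp hann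
  have hannK : shiftAnnIdeal _ (algebraMap R (FractionRing R) ∘ s) ≠ ⊥ :=
    (Submodule.ne_bot_iff _).mpr ⟨f.map _, (comap_shiftAnnIdeal_map hinj s).ge hf,
      (Polynomial.map_ne_zero_iff hinj).mpr hf0⟩
  rw [← comap_shiftAnnIdeal_map hinj]
  exact exists_isPrimitive_comap_eq_span _ hannK

/-- over a factorial domain, if `Ann(s) ≠ (0)` then `Ann(s)` is principal,
generated by a primitive polynomial `g`, unique up to a unit; moreover
`gcd(g, β₀(g,s)/X) = 1` and `deg g` is minimal among nonzero characteristic polynomials. -/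
theorem stmt10 [CommRing R] [IsDomain R] [UniqueFactorizationMonoid R]
    (s : ℕ → R) (hann : ∃ f : Polynomial R, f ≠ 0 ∧ shiftR1 f s = 0) :
    ∃ g : Polynomial R, g.IsPrimitive ∧ (∀ h : Polynomial R, shiftR1 h s = 0 ↔ g ∣ h) ∧
      (∀ g' : Polynomial R, g'.IsPrimitive → (∀ h : Polynomial R, shiftR1 h s = 0 ↔ g' ∣ h) →
        Associated g g') ∧
      (∀ e : Polynomial R, e ∣ g → e ∣ beta0DivX1 g s → IsUnit e) ∧
      (∀ h : Polynomial R, h ≠ 0 → shiftR1 h s = 0 → g.natDegree ≤ h.natDegree) := by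
  obtain ⟨f, hf0, hf⟩ := hann
  obtain ⟨g, hprim, hspan⟩ :=
    exists_isPrimitive_shiftAnnIdeal_eq_span ((Submodule.ne_bot_iff _).mpr ⟨f, hf, hf0⟩)
  have hgen : ∀ h, shiftR1 h s = 0 ↔ g ∣ h := fun h => by
    rw [← mem_shiftAnnIdeal, hspan, Ideal.mem_span_singleton]
  refine ⟨g, hprim, hgen, fun g' _ hgen' => ?_, fun e => isUnit_of_dvd_of_dvd_beta0DivX1 hgen
    hprim.ne_zero, fun h hh0 hh => natDegree_le_of_dvd ((hgen h).mp hh) hh0⟩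
  exact associated_of_dvd_dvd ((hgen g').mp ((hgen' g').mpr dvd_rfl))
    ((hgen' g).mp ((hgen g).mpr dvd_rfl))
end
end

section
/- Let n ≥ 2 and i a proper subset of {1,…,n}. For a sequence s : (-ℕ)ⁿ → R, the associated sequence s^{(i,*)} over the power series ring in the complementary variables satisfies: ⋂_{a' ∈ (-ℕ)^{i'}} Ann(s^{(a')}) = Ann(s) ∩ R[X_i] = Ann(s^{(i,*)}), where s^{(a')} denotes the a'-section of s. -/
noncomputable section

variable {R : Type*}

/-- Merge a point of `(-ℕ)^I` with a point of `(-ℕ)^{I'}` into a point of `(-ℕ)^n`. -/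
def mergePt {n : ℕ} (I : Finset (Fin n)) (a : {j : Fin n // j ∈ I} → ℕ)
    (a' : {j : Fin n // j ∉ I} → ℕ) : Fin n → ℕ :=
  fun j => if h : j ∈ I then a ⟨j, h⟩ else a' ⟨j, h⟩

/-- Right-shift action with values in an `R`-module (used for sequences valued in a
power series ring). -/
def shiftM [CommSemiring R] {σ : Type*} {M : Type*} [AddCommMonoid M] [Module R M]
    (f : MvPolynomial σ R) (s : (σ → ℕ) → M) : (σ → ℕ) → M :=
  fun b => ∑ a ∈ f.support, f.coeff a • s (fun j => b j + a j)

/-! A point of `(-ℕ)^n` is `mergePt I a a'` with `a ∈ (-ℕ)^I` and `a' ∈ (-ℕ)^{I'}`, and a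
polynomial in the `I` variables only shifts `a`: so `f ∘ s` at `(a, a')` is `f ∘ s^{(a')}` at `a`,
while the coefficient of `X^{a'}` in `f ∘ s^{(i,*)}` is `f ∘ s^{(a')}`. -/

theorem shiftA_rename_apply [CommSemiring R] {σ τ : Type*} {g : σ → τ}
    (hg : Function.Injective g) (f : MvPolynomial σ R) (s : (τ → ℕ) → R) (b : τ → ℕ) :
    shiftA (MvPolynomial.rename g f) s b =
      ∑ a ∈ f.support, f.coeff a * s (fun j => b j + Finsupp.mapDomain g a j) := by
  classical
  rw [shiftA, MvPolynomial.support_rename_of_injective hg,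
    Finset.sum_image fun a _ a' _ h => Finsupp.mapDomain_injective hg h]
  simp only [MvPolynomial.coeff_rename_mapDomain _ hg]

theorem LinearMap.map_shiftM [CommSemiring R] {σ M N : Type*} [AddCommMonoid M] [Module R M]
    [AddCommMonoid N] [Module R N] (L : M →ₗ[R] N) (f : MvPolynomial σ R)
    (S : (σ → ℕ) → M) (b : σ → ℕ) :
    L (shiftM f S b) = shiftM f (L ∘ S) b := by
  simp only [shiftM, map_sum, map_smul, Function.comp_apply]

theorem shiftM_eq_shiftA [CommSemiring R] {σ : Type*} (f : MvPolynomial σ R)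
    (s : (σ → ℕ) → R) : shiftM f s = shiftA f s :=
  rfl

theorem shiftM_eq_zero_iff_forall_coeff [CommSemiring R] {σ τ : Type*} (f : MvPolynomial σ R)
    (S : (σ → ℕ) → MvPowerSeries τ R) :
    shiftM f S = 0 ↔
      ∀ e : τ →₀ ℕ, shiftA f (fun a => MvPowerSeries.coeff e (S a)) = 0 := by
  simp only [funext_iff, Pi.zero_apply, MvPowerSeries.ext_iff, map_zero,
    LinearMap.map_shiftM, ← shiftM_eq_shiftA]
  exact forall_comm

section Sections

variable {n : ℕ} (I : Finset (Fin n))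

theorem mergePt_restrict (b : Fin n → ℕ) : mergePt I (fun j => b j) (fun j => b j) = b := by
  funext j
  by_cases h : j ∈ I <;> simp [mergePt, h]

theorem mergePt_add_mapDomain_val (b : {j : Fin n // j ∈ I} → ℕ)
    (a' : {j : Fin n // j ∉ I} → ℕ) (a : {j : Fin n // j ∈ I} →₀ ℕ) :
    (fun j => mergePt I b a' j + Finsupp.mapDomain Subtype.val a j) =
      mergePt I (fun j => b j + a j) a' := by
  funext j
  by_cases h : j ∈ I
  · simp [mergePt, h, Finsupp.mapDomain_apply Subtype.val_injective a ⟨j, h⟩]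
  · simp [mergePt, h, Finsupp.mapDomain_of_notMem_range, Subtype.range_coe_subtype]

theorem shiftA_rename_val_mergePt [CommSemiring R] (s : (Fin n → ℕ) → R)
    (f : MvPolynomial {j : Fin n // j ∈ I} R) (b : {j : Fin n // j ∈ I} → ℕ)
    (a' : {j : Fin n // j ∉ I} → ℕ) :
    shiftA (MvPolynomial.rename Subtype.val f) s (mergePt I b a') =
      shiftA f (fun a => s (mergePt I a a')) b := by
  rw [shiftA_rename_apply Subtype.val_injective]
  simp only [mergePt_add_mapDomain_val, shiftA]

theorem forall_shiftA_section_eq_zero_iff [CommSemiring R] (s : (Fin n → ℕ) → R)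
    (f : MvPolynomial {j : Fin n // j ∈ I} R) :
    (∀ a' : {j : Fin n // j ∉ I} → ℕ, shiftA f (fun a => s (mergePt I a a')) = 0) ↔
      shiftA (MvPolynomial.rename Subtype.val f) s = 0 := by
  constructor
  · intro h
    funext b
    rw [← mergePt_restrict I b, shiftA_rename_val_mergePt]
    exact congrFun (h _) _
  · intro h a'
    funext b
    rw [← shiftA_rename_val_mergePt, h, Pi.zero_apply, Pi.zero_apply]

theorem shiftM_powerSeries_eq_zero_iff_forall_section [CommSemiring R]
    (s : (Fin n → ℕ) → R) (f : MvPolynomial {j : Fin n // j ∈ I} R) :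
    shiftM f (fun a => ((fun e => s (mergePt I a fun j => e j)) :
        MvPowerSeries {j : Fin n // j ∉ I} R)) = 0 ↔
      ∀ a' : {j : Fin n // j ∉ I} → ℕ, shiftA f (fun a => s (mergePt I a a')) = 0 := by
  refine (shiftM_eq_zero_iff_forall_coeff (τ := {j : Fin n // j ∉ I}) f _).trans ?_
  rw [← Finsupp.equivFunOnFinite.symm.forall_congr_right]
  rfl

end Sections

theorem stmt11_general [CommRing R] {n : ℕ} (I : Finset (Fin n))
    (s : (Fin n → ℕ) → R) (f : MvPolynomial {j : Fin n // j ∈ I} R) :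
    ((∀ a' : {j : Fin n // j ∉ I} → ℕ,
        shiftA f (fun a => s (mergePt I a a')) = 0) ↔
      shiftA (MvPolynomial.rename Subtype.val f) s = 0) ∧
    (shiftA (MvPolynomial.rename Subtype.val f) s = 0 ↔
      shiftM f
        (fun a => ((fun e => s (mergePt I a fun j => e j)) :
          MvPowerSeries {j : Fin n // j ∉ I} R)) = 0) := by
  have hsections := forall_shiftA_section_eq_zero_iff I s f
  have hseries := shiftM_powerSeries_eq_zero_iff_forall_section I s f
  exact ⟨hsections, hsections.symm.trans hseries.symm⟩

/-- for `n ≥ 2` and `i` a proper subset of variables,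
`⋂_{a'} Ann(s^{(a')}) = Ann(s) ∩ R[X_i] = Ann(s^{(i,*)})`. -/
theorem stmt11 [CommRing R] {n : ℕ} (hn : 2 ≤ n) (I : Finset (Fin n)) (hI : I ⊂ Finset.univ)
    (s : (Fin n → ℕ) → R) (f : MvPolynomial {j : Fin n // j ∈ I} R) :
    ((∀ a' : {j : Fin n // j ∉ I} → ℕ,
        shiftA f (fun a => s (mergePt I a a')) = 0) ↔
      shiftA (MvPolynomial.rename Subtype.val f) s = 0) ∧
    (shiftA (MvPolynomial.rename Subtype.val f) s = 0 ↔
      shiftM f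
        (fun a => ((fun e => s (mergePt I a fun j => e j)) :
          MvPowerSeries {j : Fin n // j ∉ I} R)) = 0) :=
  stmt11_general I s f
end
end

section
/- Let s : (-ℕ)² → R be defined by s_{(a,b)} = 1 if a = b and 0 otherwise. Then X₁X₂ - 1 ∈ Ann(s), but Ann(s) ∩ R[X₁] = {0} and Ann(s) ∩ R[X₂] = {0}; hence s is a linear recurring sequence that is not eventually rectilinear. -/
noncomputable section

variable {R : Type*}

lemma shiftA_eq_sum [CommSemiring R] {σ : Type*} (f : MvPolynomial σ R) (s : (σ → ℕ) → R)
    (b : σ → ℕ) (S : Finset (σ →₀ ℕ)) (hS : f.support ⊆ S) :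
    shiftA f s b = ∑ a ∈ S, f.coeff a * s (fun j => b j + a j) := by
  unfold shiftA
  refine Finset.sum_subset hS ?_
  intro a _ ha
  rw [MvPolynomial.notMem_support_iff.mp ha, zero_mul]

lemma embedP_eq_sum [CommSemiring R] {n : ℕ} (i : Fin n) (p : Polynomial R) :
    embedP i p = ∑ k ∈ p.support,
      MvPolynomial.monomial (Finsupp.single i k) (p.coeff k) := by
  unfold embedP
  rw [Polynomial.eval₂_eq_sum, Polynomial.sum_def]
  refine Finset.sum_congr rfl fun k _ => ?_
  rw [MvPolynomial.X_pow_eq_monomial, MvPolynomial.C_mul_monomial, mul_one]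

lemma support_embedP [CommSemiring R] {n : ℕ} (i : Fin n) (p : Polynomial R) :
    (embedP i p).support ⊆ p.support.image (Finsupp.single i) := by
  rw [embedP_eq_sum]
  refine (MvPolynomial.support_sum ..).trans ?_
  intro a ha
  simp only [Finset.mem_biUnion] at ha
  obtain ⟨k, hk, ha⟩ := ha
  have := MvPolynomial.support_monomial_subset ha
  simp only [Finset.mem_singleton] at this
  subst this
  exact Finset.mem_image_of_mem _ hk

lemma coeff_embedP [CommSemiring R] {n : ℕ} (i : Fin n) (p : Polynomial R) (k : ℕ) :
    (embedP i p).coeff (Finsupp.single i k) = p.coeff k := by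
  rw [embedP_eq_sum, MvPolynomial.coeff_sum]
  simp only [MvPolynomial.coeff_monomial, (Finsupp.single_injective i).eq_iff]
  rw [Finset.sum_ite_eq' p.support k p.coeff]
  by_cases hk : k ∈ p.support
  · rw [if_pos hk]
  · rw [if_neg hk, Polynomial.notMem_support_iff.mp hk]

lemma shiftA_embedP [CommSemiring R] {n : ℕ} (i : Fin n) (p : Polynomial R)
    (s : (Fin n → ℕ) → R) (b : Fin n → ℕ) :
    shiftA (embedP i p) s b
      = ∑ k ∈ p.support, p.coeff k * s (fun j => b j + (Finsupp.single i k) j) := by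
  rw [shiftA_eq_sum _ s b _ (support_embedP i p),
    Finset.sum_image (fun x _ y _ h => Finsupp.single_injective i h)]
  exact Finset.sum_congr rfl fun k _ => by rw [coeff_embedP]

lemma single_inj_on {n : ℕ} (i : Fin n) :
    Function.Injective (fun k : ℕ => Finsupp.single i k) :=
  fun x y h => by
    have := DFunLike.congr_fun h i
    simpa using this

/-- for the diagonal sequence `s_{(a,b)} = 1` iff `a = b`:
`X₁X₂ - 1 ∈ Ann(s)` but `Ann(s) ∩ R[X₁] = {0}` and `Ann(s) ∩ R[X₂] = {0}`;
hence `s` is an lrs that is not eventually rectilinear. -/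
theorem stmt18 [CommRing R] [Nontrivial R]
    (s : (Fin 2 → ℕ) → R) (hs : ∀ a : Fin 2 → ℕ, s a = if a 0 = a 1 then 1 else 0) :
    shiftA (MvPolynomial.X 0 * MvPolynomial.X 1 - 1 : MvPolynomial (Fin 2) R) s = 0 ∧
    (∀ p : Polynomial R, shiftA (embedP 0 p) s = 0 → p = 0) ∧
    (∀ p : Polynomial R, shiftA (embedP 1 p) s = 0 → p = 0) ∧
    ¬ (∀ i : Fin 2, ∃ p : Polynomial R, 1 ≤ p.natDegree ∧ shiftA (embedP i p) s = 0) := by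
  have key : ∀ (i : Fin 2) (p : Polynomial R), shiftA (embedP i p) s = 0 → p = 0 := by
    intro i p h
    ext m
    have hb := congrFun h (fun j => if j = i then 0 else m)
    rw [shiftA_embedP] at hb
    simp only [Pi.zero_apply] at hb
    have hsv : ∀ k, s (fun j => (if j = i then 0 else m) + Finsupp.single i k j)
        = if k = m then 1 else 0 := by
      intro k
      rw [hs]
      fin_cases i
      · simp [Finsupp.single_apply, show ((0:Fin 2) = 1) = False by simp [Fin.ext_iff],
          show ((1:Fin 2) = 0) = False by simp [Fin.ext_iff]]
      · simp [Finsupp.single_apply, show ((0:Fin 2) = 1) = False by simp [Fin.ext_iff],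
          show ((1:Fin 2) = 0) = False by simp [Fin.ext_iff], eq_comm]
    have hb2 : ∑ k ∈ p.support, (if k = m then p.coeff k else 0) = 0 := by
      rw [Finset.sum_congr rfl fun k _ => by rw [hsv k]] at hb
      simpa [mul_ite] using hb
    rw [Finset.sum_ite_eq' p.support m p.coeff] at hb2
    by_cases hm : m ∈ p.support
    · rw [if_pos hm] at hb2
      simpa using hb2
    · simpa using Polynomial.notMem_support_iff.mp hm
  refine ⟨?_, key 0, key 1, ?_⟩
  · set e : Fin 2 →₀ ℕ := Finsupp.single 0 1 + Finsupp.single 1 1 with he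
    have h01 : (0 : Fin 2) ≠ 1 := by simp [Fin.ext_iff]
    have he0 : e 0 = 1 := by
      simp [he, Finsupp.add_apply, Finsupp.single_eq_same, Finsupp.single_eq_of_ne h01.symm]
    have he1 : e 1 = 1 := by
      simp [he, Finsupp.add_apply, Finsupp.single_eq_same, Finsupp.single_eq_of_ne h01]
    have hene : e ≠ 0 := fun hc => by simp [hc] at he0
    have hf : (MvPolynomial.X 0 * MvPolynomial.X 1 - 1 : MvPolynomial (Fin 2) R)
        = MvPolynomial.monomial e 1 - MvPolynomial.monomial 0 1 := by
      rw [MvPolynomial.X, MvPolynomial.X, MvPolynomial.monomial_mul, one_mul,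
        MvPolynomial.monomial_zero', MvPolynomial.C_1]
    funext b
    have hsub : (MvPolynomial.X 0 * MvPolynomial.X 1 - 1 : MvPolynomial (Fin 2) R).support
        ⊆ ({e, 0} : Finset (Fin 2 →₀ ℕ)) := by
      rw [hf]
      refine (MvPolynomial.support_sub _ _ _).trans ?_
      refine Finset.union_subset ?_ ?_
      · exact (MvPolynomial.support_monomial_subset).trans (by simp)
      · exact (MvPolynomial.support_monomial_subset).trans (by simp)
    rw [Pi.zero_apply, shiftA_eq_sum _ s b _ hsub]
    rw [Finset.sum_insert (by simpa using hene), Finset.sum_singleton]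
    have hce : (MvPolynomial.X 0 * MvPolynomial.X 1 - 1 : MvPolynomial (Fin 2) R).coeff e
        = 1 := by
      rw [hf, MvPolynomial.coeff_sub, MvPolynomial.coeff_monomial, MvPolynomial.coeff_monomial,
        if_pos rfl, if_neg (Ne.symm hene), sub_zero]
    have hc0 : (MvPolynomial.X 0 * MvPolynomial.X 1 - 1 : MvPolynomial (Fin 2) R).coeff 0
        = -1 := by
      rw [hf, MvPolynomial.coeff_sub, MvPolynomial.coeff_monomial, MvPolynomial.coeff_monomial,
        if_neg hene, if_pos rfl, zero_sub]
    rw [hce, hc0, one_mul, hs, hs]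
    simp only [Finsupp.coe_zero, Pi.zero_apply, add_zero, he0, he1]
    rcases eq_or_ne (b 0) (b 1) with hb | hb
    · rw [if_pos (by omega), if_pos hb]; ring
    · rw [if_neg (by omega), if_neg hb]; ring
  · intro h
    obtain ⟨p, hd, hp⟩ := h 0
    rw [key 0 p hp] at hd
    simp at hd
end
end
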